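/- Let q be a prime power, 1 ≤ k < n, and let S ⊆ G_q(k,n) be a sunflower with center Z of dimension c, 0 ≤ c ≤ k−1, such that span(S) = F_q^n. If n > 2k − c, then S^⊥ is not a sunflower. -/

import Mathlib

open Submodule Module Set

/-- The orthogonal complement of a subspace of `Fin n → F` with respect to the
standard bilinear form `(x, y) ↦ ∑ i, x i * y i`. -/
def stdOrth {F : Type} [Field F] {n : ℕ} (U : Submodule F (Fin n → F)) :
    Submodule F (Fin n → F) where
  carrier := {x | ∀ y ∈ U, ∑ i, x i * y i = 0}
  add_mem' := by
    intro a b ha hb y hy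
    simp only [Set.mem_setOf_eq] at *
    simp [add_mul, Finset.sum_add_distrib, ha y hy, hb y hy]
  zero_mem' := by intro y hy; simp
  smul_mem' := by
    intro c a ha y hy
    simp only [Set.mem_setOf_eq] at *
    simp [smul_eq_mul, mul_assoc, ← Finset.mul_sum, ha y hy]

/-- An equidistant `c`-intersecting subspace code of constant dimension `k` in `F^n`:
a set of at least two `k`-dimensional subspaces, any two distinct members of which
intersect in dimension `c`. -/
def IsEquidistantCode (F : Type) [Field F] (n k c : ℕ)
    (C : Set (Submodule F (Fin n → F))) : Prop :=
  2 ≤ C.ncard ∧ (∀ U ∈ C, Module.finrank F U = k) ∧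
    ∀ U ∈ C, ∀ V ∈ C, U ≠ V → Module.finrank F ↥(U ⊓ V) = c

/-- A set of subspaces is a sunflower if there is a common center `Z` equal to the
intersection of any two distinct members. -/
def IsSunflower {F : Type} [Field F] {n : ℕ} (C : Set (Submodule F (Fin n → F))) : Prop :=
  ∃ Z : Submodule F (Fin n → F), ∀ U ∈ C, ∀ V ∈ C, U ≠ V → U ⊓ V = Z

/-- `eMax F n k c` is the maximum cardinality of an equidistant `c`-intersecting
code of constant dimension `k` in `F^n`. -/
noncomputable def eMax (F : Type) [Field F] (n k c : ℕ) : ℕ :=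
  sSup {m | ∃ C : Set (Submodule F (Fin n → F)), IsEquidistantCode F n k c C ∧ C.ncard = m}

/-!
If the orthogonal code `S^⊥` were a sunflower with center `Z'`, then, since taking orthogonal
complements is an involution turning sums into intersections, `U + V = Z'^⊥` for all distinct
`U, V ∈ S`. Every member of `S` lies in such a sum, so `Z'^⊥ = span S = F^n`. Hence `F^n = U + V`
with `U ∩ V = Z`, and `n = 2k - c`.
-/

theorem sSup_eq_of_pairwise_sup_eq {α : Type*} [CompleteLattice α] {S : Set α}
    (hS : S.Nontrivial) {T : α} (h : ∀ U ∈ S, ∀ V ∈ S, U ≠ V → U ⊔ V = T) : sSup S = T := by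
  refine le_antisymm (sSup_le fun W hW => ?_) ?_
  · obtain ⟨W', hW', hne⟩ := hS.exists_ne W
    exact h W hW W' hW' hne.symm ▸ le_sup_left
  · obtain ⟨U, hU, V, hV, hUV⟩ := hS
    exact h U hU V hV hUV ▸ sup_le (le_sSup hU) (le_sSup hV)

section DotProduct

variable {m R : Type*} [Fintype m] [CommSemiring R]

lemma dotProductBilin_isRefl : (dotProductBilin R R : (m → R) →ₗ[R] (m → R) →ₗ[R] R).IsRefl := by
  intro x y h
  simpa [dotProduct_comm] using h

lemma dotProductBilin_nondegenerate :
    (dotProductBilin R R : (m → R) →ₗ[R] (m → R) →ₗ[R] R).Nondegenerate :=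
  ⟨fun x hx => dotProduct_eq_zero x hx,
    fun y hy => dotProduct_eq_zero y fun x => dotProduct_comm y x ▸ hy x⟩

end DotProduct

section StdOrth

variable {F : Type} [Field F] {n : ℕ}

lemma stdOrth_eq_orthogonal (U : Submodule F (Fin n → F)) :
    stdOrth U = LinearMap.BilinForm.orthogonal (dotProductBilin F F) U := by
  ext x
  simp only [LinearMap.BilinForm.mem_orthogonal_iff, dotProductBilin_apply_apply,
    dotProduct_comm _ x]
  rfl

lemma stdOrth_stdOrth (U : Submodule F (Fin n → F)) : stdOrth (stdOrth U) = U := by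
  rw [stdOrth_eq_orthogonal, stdOrth_eq_orthogonal]
  exact LinearMap.BilinForm.orthogonal_orthogonal (B := dotProductBilin F F)
    dotProductBilin_nondegenerate dotProductBilin_isRefl U

lemma stdOrth_injective : Function.Injective (stdOrth (F := F) (n := n)) :=
  Function.LeftInverse.injective stdOrth_stdOrth

lemma stdOrth_sup (U V : Submodule F (Fin n → F)) :
    stdOrth (U ⊔ V) = stdOrth U ⊓ stdOrth V := by
  refine le_antisymm (le_inf ?_ ?_) ?_
  · exact fun x hx y hy => hx y (mem_sup_left hy)
  · exact fun x hx y hy => hx y (mem_sup_right hy)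
  · rintro x ⟨hxU, hxV⟩ y hy
    obtain ⟨u, hu, v, hv, rfl⟩ := mem_sup.mp hy
    simp only [Pi.add_apply, mul_add, Finset.sum_add_distrib, hxU u hu, hxV v hv, add_zero]

theorem exists_sup_eq_of_isSunflower_image_stdOrth {S : Set (Submodule F (Fin n → F))}
    (h : IsSunflower (stdOrth '' S)) : ∃ T, ∀ U ∈ S, ∀ V ∈ S, U ≠ V → U ⊔ V = T := by
  obtain ⟨Z, hZ⟩ := h
  refine ⟨stdOrth Z, fun U hU V hV hUV => ?_⟩
  rw [← hZ _ (mem_image_of_mem _ hU) _ (mem_image_of_mem _ hV) (stdOrth_injective.ne hUV),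
    ← stdOrth_sup, stdOrth_stdOrth]

end StdOrth

theorem orth_of_spanning_sunflower_not_sunflower_general
    (F : Type) [Field F] (k n c : ℕ)
    (S : Set (Submodule F (Fin n → F))) (Z : Submodule F (Fin n → F))
    (hcard : 2 ≤ S.ncard) (hdim : ∀ U ∈ S, Module.finrank F U = k)
    (hZ : ∀ U ∈ S, ∀ V ∈ S, U ≠ V → U ⊓ V = Z) (hZdim : Module.finrank F Z = c)
    (hspan : sSup S = ⊤) (hn : 2 * k < n + c) :
    ¬ IsSunflower (stdOrth '' S) := by
  intro hsun
  obtain ⟨T, hT⟩ := exists_sup_eq_of_isSunflower_image_stdOrth hsun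
  have hS : S.Nontrivial := (one_lt_ncard_iff_nontrivial_and_finite.mp hcard).1
  have hT_top : T = ⊤ := (sSup_eq_of_pairwise_sup_eq hS hT).symm.trans hspan
  obtain ⟨U, hU, V, hV, hUV⟩ := hS
  have hdim_sum := finrank_sup_add_finrank_inf_eq U V
  rw [hT U hU V hV hUV, hT_top, hZ U hU V hV hUV, finrank_top, finrank_fin_fun, hdim U hU,
    hdim V hV, hZdim] at hdim_sum
  omega

/-- If a sunflower `S ⊆ G_q(k,n)` with center of dimension `c` spans `F_q^n` and
`n > 2k - c`, then `S^⊥` is not a sunflower. -/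
theorem orth_of_spanning_sunflower_not_sunflower
    (q : ℕ) (hq : IsPrimePow q) (F : Type) [Field F] [Fintype F]
    (hF : Fintype.card F = q) (k n c : ℕ) (hk : 1 ≤ k) (hkn : k < n) (hc : c ≤ k - 1)
    (S : Set (Submodule F (Fin n → F))) (Z : Submodule F (Fin n → F))
    (hcard : 2 ≤ S.ncard) (hdim : ∀ U ∈ S, Module.finrank F U = k)
    (hZ : ∀ U ∈ S, ∀ V ∈ S, U ≠ V → U ⊓ V = Z) (hZdim : Module.finrank F Z = c)
    (hspan : sSup S = ⊤) (hn : 2 * k < n + c) :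
    ¬ IsSunflower (stdOrth '' S) :=
  orth_of_spanning_sunflower_not_sunflower_general F k n c S Z hcard hdim hZ hZdim hspan hn
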